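/- Let R be a Noetherian commutative ring and let I be a pure ideal of R. Then the global dimension of R⋈I equals the global dimension of R. -/

import Mathlib

universe u

open scoped TensorProduct

namespace Paper

/-- The amalgamated duplication `R ⋈ I`, as the subring
`{(r, s) : s - r ∈ I} = {(r, r+i) : r ∈ R, i ∈ I}` of `R × R`. -/
def dup (R : Type*) [CommRing R] (I : Ideal R) : Subring (R × R) where
  carrier := {p | p.2 - p.1 ∈ I}
  zero_mem' := by simp
  one_mem' := by simp
  add_mem' := by
    intro a b ha hb
    simp only [Set.mem_setOf_eq, Prod.fst_add, Prod.snd_add] at *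
    have h : a.2 + b.2 - (a.1 + b.1) = (a.2 - a.1) + (b.2 - b.1) := by ring
    rw [h]; exact I.add_mem ha hb
  neg_mem' := by
    intro a ha
    simp only [Set.mem_setOf_eq, Prod.fst_neg, Prod.snd_neg] at *
    have h : -a.2 - -a.1 = -(a.2 - a.1) := by ring
    rw [h]; exact I.neg_mem ha
  mul_mem' := by
    intro a b ha hb
    simp only [Set.mem_setOf_eq, Prod.fst_mul, Prod.snd_mul] at *
    have h : a.2 * b.2 - a.1 * b.1 = a.2 * (b.2 - b.1) + (a.2 - a.1) * b.1 := by ring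
    rw [h]; exact I.add_mem (I.mul_mem_left _ hb) (I.mul_mem_right _ ha)

lemma mem_dup {R : Type*} [CommRing R] {I : Ideal R} {p : R × R} :
    p ∈ dup R I ↔ p.2 - p.1 ∈ I := Iff.rfl

/-- The diagonal embedding `R → R ⋈ I`, `r ↦ (r, r)`. -/
def diag (R : Type*) [CommRing R] (I : Ideal R) : R →+* dup R I where
  toFun r := ⟨(r, r), mem_dup.mpr (by simp)⟩
  map_one' := rfl
  map_mul' _ _ := rfl
  map_zero' := rfl
  map_add' _ _ := rfl

noncomputable instance dupAlgebra (R : Type*) [CommRing R] (I : Ideal R) :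
    Algebra R (dup R I) := (diag R I).toAlgebra

/-- `pdLE R n M` means that `M` has projective dimension `≤ n` as an `R`-module. -/
def pdLE (R : Type u) [CommRing R] : ℕ → (M : Type u) → [AddCommGroup M] → [Module R M] → Prop
  | 0, M, _, _ => Module.Projective R M
  | (n + 1), M, _, _ => pdLE R n (LinearMap.ker (Finsupp.linearCombination R (id : M → M)))

/-- `fdLE R n M` means that `M` has flat dimension `≤ n` as an `R`-module. -/
def fdLE (R : Type u) [CommRing R] : ℕ → (M : Type u) → [AddCommGroup M] → [Module R M] → Prop
  | 0, M, _, _ => Module.Flat R M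
  | (n + 1), M, _, _ => fdLE R n (LinearMap.ker (Finsupp.linearCombination R (id : M → M)))

/-- The projective dimension of an `R`-module `M`, as an element of `ℕ∞`. -/
noncomputable def projDim (R : Type u) [CommRing R] (M : Type u) [AddCommGroup M]
    [Module R M] : ℕ∞ :=
  sInf {n : ℕ∞ | ∃ k : ℕ, (k : ℕ∞) = n ∧ pdLE R k M}

/-- The flat dimension of an `R`-module `M`, as an element of `ℕ∞`. -/
noncomputable def flatDim (R : Type u) [CommRing R] (M : Type u) [AddCommGroup M]
    [Module R M] : ℕ∞ :=
  sInf {n : ℕ∞ | ∃ k : ℕ, (k : ℕ∞) = n ∧ fdLE R k M}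

/-- The global dimension of `R`: the supremum of projective dimensions of `R`-modules. -/
noncomputable def gldim (R : Type u) [CommRing R] : ℕ∞ :=
  ⨆ (M : Type u) (_ : AddCommGroup M) (_ : Module R M), projDim R M

/-- The weak global dimension of `R`: the supremum of flat dimensions of `R`-modules. -/
noncomputable def wdim (R : Type u) [CommRing R] : ℕ∞ :=
  ⨆ (M : Type u) (_ : AddCommGroup M) (_ : Module R M), flatDim R M


/-- The first projection `R ⋈ I → R`, `(r, r+i) ↦ r`. -/
def dupFst (R : Type*) [CommRing R] (I : Ideal R) : dup R I →+* R :=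
  (RingHom.fst R R).comp (dup R I).subtype

/-- The second projection `R ⋈ I → R`, `(r, r+i) ↦ r + i`. -/
def dupSnd (R : Type*) [CommRing R] (I : Ideal R) : dup R I →+* R :=
  (RingHom.snd R R).comp (dup R I).subtype

/-- A commutative ring is von Neumann regular if every `a` satisfies `a = a²b` for some `b`. -/
def IsVNRegular (R : Type*) [CommRing R] : Prop := ∀ a : R, ∃ b : R, a = a * a * b

/-- A commutative ring is semihereditary if every finitely generated ideal is projective. -/
def IsSemihereditary (R : Type*) [CommRing R] : Prop :=
  ∀ J : Ideal R, J.FG → Module.Projective R J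

/-- A commutative ring is coherent if every finitely generated ideal is finitely presented. -/
def IsCoherentRing (R : Type*) [CommRing R] : Prop :=
  ∀ J : Ideal R, J.FG → Module.FinitePresentation R J

/-- The content of a polynomial: the ideal generated by its coefficients. -/
def contentIdeal {R : Type*} [CommRing R] (f : Polynomial R) : Ideal R :=
  Ideal.span (Set.range f.coeff)

/-- A commutative ring is Gaussian if `c(fg) = c(f)c(g)` for all polynomials `f, g`. -/
def IsGaussianRing (R : Type*) [CommRing R] : Prop :=
  ∀ f g : Polynomial R, contentIdeal (f * g) = contentIdeal f * contentIdeal g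

/-- `R` is a `(1,d)`-ring if every finitely presented (i.e. `1`-presented) `R`-module has
projective dimension at most `d`. -/
def IsOneDRing (R : Type u) [CommRing R] (d : ℕ) : Prop :=
  ∀ (M : Type u) [AddCommGroup M] [Module R M],
    Module.FinitePresentation R M → projDim R M ≤ (d : ℕ∞)

/-- The trace ideal of an `R`-module `M`: the sum of the images of all `R`-linear maps
`M → R`. -/
def traceIdeal (R : Type*) [CommRing R] (M : Type*) [AddCommGroup M] [Module R M] : Ideal R :=
  ⨆ f : M →ₗ[R] R, LinearMap.range f

/-!
Over a Noetherian ring `R ⧸ I` is finitely presented, so purity makes it projective and `I` a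
direct summand of `R`, say `R = I ⊕ J`. Then `(r, s) ↦ (r, s mod J)` identifies `R ⋈ I` with
`R × R ⧸ J`. The global dimension of a product of rings is the maximum of those of the factors,
and `gldim (R ⧸ J) ≤ gldim R` because restricting scalars along a surjection `S → A` with `A`
projective over `S` preserves projective dimension.
-/

open Module Finsupp Function
open LinearMap (ker)

section ProjectiveDimension

variable {R : Type u} [CommRing R] {M N P Q : Type u}
  [AddCommGroup M] [Module R M] [AddCommGroup N] [Module R N]
  [AddCommGroup P] [Module R P] [AddCommGroup Q] [Module R Q]

theorem projective_finsupp (X : Type*) [Projective R P] : Projective R (X →₀ P) := by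
  classical
  exact .of_equiv' (finsuppLequivDFinsupp R).symm

theorem schanuel [Projective R P] [Projective R Q] (p : P →ₗ[R] M) (q : Q →ₗ[R] M)
    (hp : Surjective p) (hq : Surjective q) :
    Nonempty ((ker p × Q) ≃ₗ[R] (ker q × P)) := by
  obtain ⟨σ, hσ⟩ := projective_lifting_property p q hp
  obtain ⟨τ, hτ⟩ := projective_lifting_property q p hq
  have hσ' (y : Q) : p (σ y) = q y := congr($hσ y)
  have hτ' (x : P) : q (τ x) = p x := congr($hτ x)
  exact ⟨
    { toFun := fun x => (⟨x.2 - τ (x.1 + σ x.2), by simp [hσ', hτ']⟩, x.1 + σ x.2)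
      invFun := fun y => (⟨y.2 - σ (y.1 + τ y.2), by simp [hσ', hτ']⟩, y.1 + τ y.2)
      map_add' := fun x y => by ext <;> simp <;> abel
      map_smul' := fun c x => by ext <;> simp [smul_sub]
      left_inv := fun x => by ext <;> simp
      right_inv := fun y => by ext <;> simp }⟩

def kerProdMapEquiv (f : M →ₗ[R] N) (g : P →ₗ[R] Q) : ker (f.prodMap g) ≃ₗ[R] ker f × ker g where
  toFun x := (⟨x.1.1, congr_arg Prod.fst x.2⟩, ⟨x.1.2, congr_arg Prod.snd x.2⟩)
  invFun y := ⟨(y.1, y.2), Prod.ext y.1.2 y.2.2⟩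
  map_add' _ _ := rfl
  map_smul' _ _ := rfl
  left_inv _ := rfl
  right_inv _ := rfl

theorem projective_ker_linearCombination [Projective R M] :
    Projective R (ker (linearCombination R (id : M → M))) := by
  obtain ⟨s, hs⟩ := projective_lifting_property (linearCombination R id) LinearMap.id
    (linearCombination_id_surjective R M)
  have hs' (m : M) : linearCombination R id (s m) = m := congr($hs m)
  refine .of_split (ker _).subtype
    (LinearMap.codRestrict _ (LinearMap.id - s ∘ₗ linearCombination R id) fun x => ?_) ?_
  · simp [hs']
  · ext x
    simp

theorem projective_of_prod_equiv [Projective R N] [Projective R Q] (e : (M × P) ≃ₗ[R] (N × Q)) :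
    Projective R M :=
  have := Projective.of_equiv' e.symm
  .of_split (LinearMap.inl R M P) (LinearMap.fst R M P) (LinearMap.fst_comp_inl R M P)

theorem pdLE_iff_of_prod_equiv [Projective R P] [Projective R Q] (e : (M × P) ≃ₗ[R] (N × Q))
    (n : ℕ) : pdLE R n M ↔ pdLE R n N := by
  induction n generalizing M N P Q with
  | zero =>
    exact ⟨fun (_ : Projective R M) => projective_of_prod_equiv e.symm,
      fun (_ : Projective R N) => projective_of_prod_equiv e⟩
  | succ n ih =>
    -- Schanuel's lemma for the free covers of `M × P` and `N × Q` (the latter through `e`).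
    let p := (linearCombination R (id : M → M)).prodMap (linearCombination R (id : P → P))
    let q := e.symm.toLinearMap ∘ₗ
      (linearCombination R (id : N → N)).prodMap (linearCombination R (id : Q → Q))
    obtain ⟨f⟩ := schanuel p q
      ((linearCombination_id_surjective R M).prodMap (linearCombination_id_surjective R P))
      (e.symm.surjective.comp
        ((linearCombination_id_surjective R N).prodMap (linearCombination_id_surjective R Q)))
    have := projective_ker_linearCombination (R := R) (M := P)
    have := projective_ker_linearCombination (R := R) (M := Q)
    exact ih (P := ker (linearCombination R (id : P → P)) × ((N →₀ R) × (Q →₀ R)))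
      (Q := ker (linearCombination R (id : Q → Q)) × ((M →₀ R) × (P →₀ R)))
      ((LinearEquiv.prodAssoc R _ _ _).symm ≪≫ₗ
        ((kerProdMapEquiv _ _).symm.prodCongr (.refl R _)) ≪≫ₗ f ≪≫ₗ
        ((LinearEquiv.ofEq _ _ (e.symm.ker_comp _) ≪≫ₗ kerProdMapEquiv _ _).prodCongr
          (.refl R _)) ≪≫ₗ
        LinearEquiv.prodAssoc R _ _ _)

theorem pdLE_congr (e : M ≃ₗ[R] N) (n : ℕ) : pdLE R n M ↔ pdLE R n N :=
  pdLE_iff_of_prod_equiv (e.prodCongr (.refl R PUnit.{u + 1})) n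

theorem pdLE_succ_iff_of_surjective [Projective R P] (p : P →ₗ[R] M) (hp : Surjective p)
    (n : ℕ) : pdLE R (n + 1) M ↔ pdLE R n (ker p) :=
  let ⟨e⟩ := schanuel _ p (linearCombination_id_surjective R M) hp
  pdLE_iff_of_prod_equiv e n

theorem pdLE_prod_iff (n : ℕ) : pdLE R n (M × N) ↔ pdLE R n M ∧ pdLE R n N := by
  induction n generalizing M N with
  | zero =>
    constructor
    · intro (_ : Projective R (M × N))
      exact ⟨.of_split (LinearMap.inl R M N) (LinearMap.fst R M N) (LinearMap.fst_comp_inl R M N),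
        .of_split (LinearMap.inr R M N) (LinearMap.snd R M N) (LinearMap.snd_comp_inr R M N)⟩
    · rintro ⟨(_ : Projective R M), (_ : Projective R N)⟩
      exact inferInstanceAs (Projective R (M × N))
  | succ n ih =>
    exact (pdLE_succ_iff_of_surjective
      ((linearCombination R (id : M → M)).prodMap (linearCombination R (id : N → N)))
      ((linearCombination_id_surjective R M).prodMap (linearCombination_id_surjective R N)) n).trans
      ((pdLE_congr (kerProdMapEquiv _ _) n).trans ih)

theorem pdLE_of_projective [Projective R M] (n : ℕ) : pdLE R n M := by
  induction n generalizing M with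
  | zero => assumption
  | succ n ih =>
    have := projective_ker_linearCombination (R := R) (M := M)
    exact ih

theorem pdLE_mono {m n : ℕ} (hmn : m ≤ n) (h : pdLE R m M) : pdLE R n M := by
  induction m generalizing M n with
  | zero =>
    have : Projective R M := h
    exact pdLE_of_projective n
  | succ m ih =>
    cases n with
    | zero => omega
    | succ n => exact ih (M := ker (linearCombination R (id : M → M))) (by omega) h

end ProjectiveDimension

section GlobalDimension

variable {R : Type u} [CommRing R] (M : Type u) [AddCommGroup M] [Module R M]

theorem projDim_le_iff (n : ℕ) : projDim R M ≤ n ↔ pdLE R n M := by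
  refine ⟨fun h => ?_, fun h => sInf_le ⟨n, rfl, h⟩⟩
  have hne : {m : ℕ∞ | ∃ k : ℕ, (k : ℕ∞) = m ∧ pdLE R k M}.Nonempty := by
    by_contra hempty
    simp [projDim, Set.not_nonempty_iff_eq_empty.1 hempty] at h
  obtain ⟨k, hk, hpd⟩ := csInf_mem hne
  rw [projDim, ← hk] at h
  exact pdLE_mono (by exact_mod_cast h) hpd

theorem projDim_le_of_forall_pdLE (c : ℕ∞) (h : ∀ n : ℕ, c ≤ n → pdLE R n M) :
    projDim R M ≤ c := by
  induction c using ENat.recTopCoe with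
  | top => exact le_top
  | coe n => exact (projDim_le_iff M n).2 (h n le_rfl)

theorem projDim_eq_of_forall_pdLE_iff {R' : Type u} [CommRing R'] (N : Type u) [AddCommGroup N]
    [Module R' N] (h : ∀ n, pdLE R n M ↔ pdLE R' n N) : projDim R M = projDim R' N := by
  simp only [projDim, h]

theorem projDim_le_gldim : projDim R M ≤ gldim R :=
  le_iSup_of_le M <| le_iSup_of_le ‹_› <| le_iSup_of_le ‹_› le_rfl

theorem gldim_le {c : ℕ∞} (h : ∀ (M : Type u) [AddCommGroup M] [Module R M], projDim R M ≤ c) :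
    gldim R ≤ c :=
  iSup_le fun M => iSup_le fun _ => iSup_le fun _ => h M

end GlobalDimension

section RestrictScalars

variable {S A : Type u} [CommRing S] [CommRing A] [Algebra S A]
  {M : Type u} [AddCommGroup M] [Module A M] [Module S M] [IsScalarTower S A M]

theorem projective_of_isScalarTower [Projective S A] [Projective A M] : Projective S M := by
  have := projective_finsupp (R := S) (P := A) M
  obtain ⟨s, hs⟩ := projective_lifting_property (linearCombination A (id : M → M)) LinearMap.id
    (linearCombination_id_surjective A M)
  exact .of_split (s.restrictScalars S) ((linearCombination A id).restrictScalars S)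
    (LinearMap.ext fun m => congr($hs m))

theorem projective_of_surjective_algebraMap (hA : Surjective (algebraMap S A)) [Projective S M] :
    Projective A M := by
  obtain ⟨s, hs⟩ := projective_lifting_property (linearCombination S (id : M → M)) LinearMap.id
    (linearCombination_id_surjective S M)
  let t : M →ₗ[S] M →₀ A := mapRange.linearMap (Algebra.linearMap S A) ∘ₗ s
  refine .of_split (t.extendScalarsOfSurjective hA) (linearCombination A id)
    (LinearMap.ext fun m => ?_)
  simpa [t, linearCombination_apply, sum_mapRange_index] using congr($hs m)

theorem pdLE_iff_of_surjective_algebraMap (hA : Surjective (algebraMap S A)) [Projective S A]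
    (n : ℕ) : pdLE S n M ↔ pdLE A n M := by
  induction n generalizing M with
  | zero =>
    constructor
    · intro (_ : Projective S M)
      exact projective_of_surjective_algebraMap hA
    · intro (_ : Projective A M)
      exact projective_of_isScalarTower (A := A)
  | succ n ih =>
    -- The free cover of `M` over `A` is an `S`-projective cover with the same kernel.
    have := projective_finsupp (R := S) (P := A) M
    exact (pdLE_succ_iff_of_surjective ((linearCombination A (id : M → M)).restrictScalars S)
      (linearCombination_id_surjective A M) n).trans
      (ih (M := ker (linearCombination A (id : M → M))))

theorem gldim_le_of_surjective_algebraMap (hA : Surjective (algebraMap S A)) [Projective S A] :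
    gldim A ≤ gldim S :=
  gldim_le fun M _ _ => by
    let : Module S M := Module.compHom M (algebraMap S A)
    have : IsScalarTower S A M := IsScalarTower.of_compHom S A M
    rw [projDim_eq_of_forall_pdLE_iff M M fun n => (pdLE_iff_of_surjective_algebraMap hA n).symm]
    exact projDim_le_gldim M

theorem gldim_le_of_ringEquiv {B : Type u} [CommRing B] (φ : A ≃+* B) : gldim B ≤ gldim A := by
  let := φ.toRingHom.toAlgebra
  have : Projective A B := .of_equiv' (AlgEquiv.ofRingEquiv (f := φ) fun _ => rfl).toLinearEquiv
  exact gldim_le_of_surjective_algebraMap φ.surjective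

theorem gldim_congr {B : Type u} [CommRing B] (φ : A ≃+* B) : gldim A = gldim B :=
  le_antisymm (gldim_le_of_ringEquiv φ.symm) (gldim_le_of_ringEquiv φ)

end RestrictScalars

section Prod

variable (A B : Type u) [CommRing A] [CommRing B]

abbrev prodFstAlgebra : Algebra (A × B) A := (RingHom.fst A B).toAlgebra

abbrev prodSndAlgebra : Algebra (A × B) B := (RingHom.snd A B).toAlgebra

attribute [local instance] prodFstAlgebra prodSndAlgebra

theorem projective_prod_fst : Projective (A × B) A :=
  .of_split
    { toFun a := (a, 0)
      map_add' _ _ := by simp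
      map_smul' s a := Prod.ext rfl (mul_zero s.2).symm }
    (Algebra.linearMap (A × B) A) (LinearMap.ext fun _ => rfl)

theorem projective_prod_snd : Projective (A × B) B :=
  .of_split
    { toFun b := (0, b)
      map_add' _ _ := by simp
      map_smul' s b := Prod.ext (mul_zero s.1).symm rfl }
    (Algebra.linearMap (A × B) B) (LinearMap.ext fun _ => rfl)

noncomputable def prodTensorEquiv (M : Type u) [AddCommGroup M] [Module (A × B) M] :
    M ≃ₗ[A × B] (A ⊗[A × B] M) × (B ⊗[A × B] M) :=
  -- `A × B` as a module over itself is, definitionally, the product of the modules `A` and `B`.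
  (TensorProduct.lid (A × B) M).symm ≪≫ₗ TensorProduct.prodLeft (A × B) (A × B) A B M

theorem gldim_prod : gldim (A × B) = gldim A ⊔ gldim B := by
  have := projective_prod_fst A B
  have := projective_prod_snd A B
  refine le_antisymm (gldim_le fun M _ _ => projDim_le_of_forall_pdLE _ _ fun n hn => ?_)
    (sup_le (gldim_le_of_surjective_algebraMap Prod.fst_surjective)
      (gldim_le_of_surjective_algebraMap Prod.snd_surjective))
  rw [pdLE_congr (prodTensorEquiv A B M), pdLE_prod_iff,
    pdLE_iff_of_surjective_algebraMap Prod.fst_surjective,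
    pdLE_iff_of_surjective_algebraMap (S := A × B) Prod.snd_surjective,
    ← projDim_le_iff, ← projDim_le_iff]
  exact ⟨(projDim_le_gldim _).trans (le_sup_left.trans hn),
    (projDim_le_gldim _).trans (le_sup_right.trans hn)⟩

end Prod

section Duplication

variable {R : Type u} [CommRing R] {I J : Ideal R}

theorem exists_isCompl_of_flat_quotient [IsNoetherianRing R] (h : Flat R (R ⧸ I)) :
    ∃ J : Ideal R, IsCompl I J := by
  have := finitePresentation_of_finite R (R ⧸ I)
  have : Projective R (R ⧸ I) := Flat.projective_of_finitePresentation
  obtain ⟨s, hs⟩ := projective_lifting_property I.mkQ LinearMap.id I.mkQ_surjective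
  have hs' (x : R ⧸ I) : I.mkQ (s x) = x := congr($hs x)
  have hidem : IsIdempotentElem (s ∘ₗ I.mkQ) := LinearMap.ext fun x => by simp [hs']
  have hker : ker (s ∘ₗ I.mkQ) = I := by
    rw [LinearMap.ker_comp_of_ker_eq_bot _ (LinearMap.ker_eq_bot_of_inverse hs), Submodule.ker_mkQ]
  have hcompl := (LinearMap.IsIdempotentElem.isCompl hidem).symm
  rw [hker] at hcompl
  exact ⟨_, hcompl⟩

theorem projective_quotient_of_isCompl (h : IsCompl I J) : Projective R (R ⧸ J) :=
  have : Projective R I := .of_split I.subtype (I.projectionOnto J h)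
    (I.projectionOnto_comp_subtype h)
  .of_equiv' (J.quotientEquivOfIsCompl I h.symm).symm

noncomputable def dupEquivProd (h : IsCompl I J) : dup R I ≃+* R × (R ⧸ J) := by
  refine .ofBijective ((dupFst R I).prod ((Ideal.Quotient.mk J).comp (dupSnd R I))) ⟨?_, ?_⟩
  · refine (injective_iff_map_eq_zero _).2 fun ⟨(r, s), hrs⟩ hx => ?_
    obtain ⟨rfl : r = 0, hs : Ideal.Quotient.mk J s = 0⟩ := Prod.ext_iff.1 hx
    have hsI : s ∈ I := by simpa [mem_dup] using hrs
    exact Subtype.ext (Prod.ext rfl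
      (Submodule.disjoint_def.1 h.disjoint s hsI (Ideal.Quotient.eq_zero_iff_mem.1 hs)))
  · rintro ⟨r, t⟩
    obtain ⟨t, rfl⟩ := Ideal.Quotient.mk_surjective t
    obtain ⟨i, hi, j, hj, hij⟩ := Submodule.mem_sup.1 (h.sup_eq_top ▸ Submodule.mem_top (x := 1))
    -- `r * j + t * i` is `r` modulo `I` and `t` modulo `J`.
    refine ⟨⟨(r, r * j + t * i), ?_⟩, Prod.ext rfl (Ideal.Quotient.eq.2 ?_)⟩
    · show r * j + t * i - r ∈ I
      convert I.mul_mem_left (t - r) hi using 1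
      linear_combination r * hij
    · show r * j + t * i - t ∈ J
      convert J.mul_mem_left (r - t) hj using 1
      linear_combination t * hij

end Duplication

/-- If `I` is a pure ideal of a Noetherian ring `R`, then the global dimension of `R ⋈ I`
equals the global dimension of `R`. -/
theorem gldim_dup_eq_of_pure (R : Type u) [CommRing R] [IsNoetherianRing R] (I : Ideal R)
    (hpure : Module.Flat R (R ⧸ I)) :
    gldim (dup R I) = gldim R := by
  obtain ⟨J, hIJ⟩ := exists_isCompl_of_flat_quotient hpure
  have := projective_quotient_of_isCompl hIJ
  rw [gldim_congr (dupEquivProd hIJ), gldim_prod, sup_eq_left]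
  exact gldim_le_of_surjective_algebraMap Ideal.Quotient.mk_surjective

end Paper
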